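/- arXiv:2003.00652 — 3 statements merged into one kernel-verified Lean document; each statement's English description precedes it below -/
import Mathlib

section
/- For any two probability measures P and Q on a standard Borel space, the Jensen–Shannon divergence (with natural logarithm) and the squared Hellinger distance satisfy (ln 2)·H²(P,Q) ≤ JS(P,Q) ≤ H²(P,Q). -/
open MeasureTheory ProbabilityTheory Filter
open scoped ENNReal NNReal

noncomputable section

universe u

/-- The squared Hellinger distance `H²(P,Q) = (1/2) ∫ (√(dP/dμ) - √(dQ/dμ))² dμ`, computed
with the dominating measure `μ = P + Q` (the value does not depend on the choice of a
dominating measure). -/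
def sqHellinger {Ω : Type*} [MeasurableSpace Ω] (P Q : Measure Ω) : ℝ :=
  (1/2) * ∫ x, (Real.sqrt ((P.rnDeriv (P + Q) x).toReal)
    - Real.sqrt ((Q.rnDeriv (P + Q) x).toReal)) ^ 2 ∂(P + Q)

open scoped Classical in
/-- The Kullback-Leibler divergence `KL(P,Q) = ∫ log (dP/dQ) dP` when `P ≪ Q` (and the
integral exists), and `+∞` otherwise. -/
def klDiv {Ω : Type*} [MeasurableSpace Ω] (P Q : Measure Ω) : ℝ≥0∞ :=
  if P ≪ Q ∧ Integrable (fun x => Real.log ((P.rnDeriv Q x).toReal)) P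
  then ENNReal.ofReal (∫ x, Real.log ((P.rnDeriv Q x).toReal) ∂P)
  else ⊤

/-- The Jensen-Shannon divergence (with natural logarithm)
`JS(P,Q) = (1/2) KL(P, (P+Q)/2) + (1/2) KL(Q, (P+Q)/2)`. -/
def jsDiv {Ω : Type*} [MeasurableSpace Ω] (P Q : Measure Ω) : ℝ≥0∞ :=
  (2:ℝ≥0∞)⁻¹ * klDiv P ((2:ℝ≥0∞)⁻¹ • (P + Q))
    + (2:ℝ≥0∞)⁻¹ * klDiv Q ((2:ℝ≥0∞)⁻¹ • (P + Q))

/-!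
With `μ = P + Q`, `p = dP/dμ` and `q = dQ/dμ` we have `p + q = 1` a.e., and
`JS(P,Q) = ½ ∫ (p log 2p + q log 2q) dμ = ½ ∫ (log 2 - h(p)) dμ`,
`H²(P,Q) = ½ ∫ (√p - √q)² dμ = ½ ∫ (1 - 2 √(p (1-p))) dμ`, where `h` is the binary entropy.
Both inequalities thus reduce to bounds on `[0, 1]`:
`h(p) ≤ 2 log 2 · √(p (1-p))` and `log 2 - 1 ≤ h(p) - 2 √(p (1-p))`, with equality at `p = ½`.
By the symmetry `p ↔ 1 - p` it suffices to take `p ≥ ½`, where `h(p) / √(p (1-p))` decreases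
and `h(p) - 2 √(p (1-p))` increases; the signs of the derivatives come from
`2 log s ≤ s - 1/s` for `s ≥ 1` and `(1-p) log (1-p) ≤ p log p` for `p ≥ ½`.
-/

open Real Set

lemma two_mul_log_le_sub_inv {s : ℝ} (hs : 1 ≤ s) : 2 * log s ≤ s - s⁻¹ := by
  have h := self_le_sinh_iff.mpr (log_nonneg hs)
  rw [sinh_log (by linarith)] at h
  linarith

lemma log_sub_log_one_sub_le {p : ℝ} (hp : 2⁻¹ ≤ p) (hp1 : p < 1) :
    log p - log (1 - p) ≤ (2 * p - 1) / √(p * (1 - p)) := by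
  have hp0 : 0 < √p := sqrt_pos.mpr (by linarith)
  have hq0 : 0 < √(1 - p) := sqrt_pos.mpr (by linarith)
  have hs : 1 ≤ √p / √(1 - p) := (one_le_div hq0).mpr (sqrt_le_sqrt (by linarith))
  have hlog : 2 * log (√p / √(1 - p)) = log p - log (1 - p) := by
    rw [log_div hp0.ne' hq0.ne', log_sqrt (by linarith), log_sqrt (by linarith)]
    ring
  have hsub : √p / √(1 - p) - (√p / √(1 - p))⁻¹ = (2 * p - 1) / √(p * (1 - p)) := by
    rw [sqrt_mul (by linarith)]
    field_simp
    rw [sq_sqrt (by linarith), sq_sqrt (by linarith)]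
    ring
  exact hlog ▸ hsub ▸ two_mul_log_le_sub_inv hs

lemma one_sub_mul_log_one_sub_le_mul_log {p : ℝ} (hp : 2⁻¹ ≤ p) (hp1 : p < 1) :
    (1 - p) * log (1 - p) ≤ p * log p := by
  have hp0 : 0 < p := by linarith
  have hq0 : 0 < 1 - p := by linarith
  have h₁ : -log p ≤ p⁻¹ - 1 := by linarith [one_sub_inv_le_log_of_pos hp0]
  have h₂ : log (1 - p) - log p ≤ (1 - p) / p - 1 := by
    simpa [log_div hq0.ne' hp0.ne'] using log_le_sub_one_of_pos (div_pos hq0 hp0)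
  -- `(1-p) log (1-p) - p log p = (1-p) (log (1-p) - log p) + (2p-1) (-log p)`
  have e : (2 * p - 1) * (p⁻¹ - 1) + (1 - p) * ((1 - p) / p - 1) = 0 := by
    field_simp
    ring
  linarith [mul_le_mul_of_nonneg_left h₁ (by linarith : 0 ≤ 2 * p - 1),
    mul_le_mul_of_nonneg_left h₂ hq0.le]

lemma hasDerivAt_sqrt_mul_one_sub {p : ℝ} (hp0 : 0 < p) (hp1 : p < 1) :
    HasDerivAt (fun x => √(x * (1 - x))) ((1 - 2 * p) / (2 * √(p * (1 - p)))) p := by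
  have h := ((hasDerivAt_id' p).fun_mul ((hasDerivAt_id' p).const_sub 1)).sqrt
    (mul_pos hp0 (by linarith)).ne'
  convert h using 2
  ring

lemma sqrt_two_inv_mul_one_sub_two_inv : √(2⁻¹ * (1 - 2⁻¹) : ℝ) = 2⁻¹ := by
  rw [show (2⁻¹ * (1 - 2⁻¹) : ℝ) = 2⁻¹ ^ 2 by norm_num, sqrt_sq (by norm_num)]

lemma monotoneOn_binEntropy_sub_two_mul_sqrt :
    MonotoneOn (fun p => binEntropy p - 2 * √(p * (1 - p))) (Icc 2⁻¹ 1) := by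
  refine monotoneOn_of_hasDerivWithinAt_nonneg (convex_Icc _ _) (by fun_prop)
    (f' := fun p => log (1 - p) - log p + (2 * p - 1) / √(p * (1 - p))) ?_ ?_
  all_goals rw [interior_Icc]; rintro p ⟨hp, hp1⟩
  · have hp0 : 0 < p := by linarith
    refine (((hasDerivAt_binEntropy hp0.ne' hp1.ne).sub
      ((hasDerivAt_sqrt_mul_one_sub hp0 hp1).const_mul 2)).congr_deriv ?_).hasDerivWithinAt
    field_simp
    ring
  · linarith [log_sub_log_one_sub_le hp.le hp1]

lemma antitoneOn_binEntropy_div_sqrt :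
    AntitoneOn (fun p => binEntropy p / √(p * (1 - p))) (Ico 2⁻¹ 1) := by
  have hpos : ∀ p ∈ Ico (2⁻¹ : ℝ) 1, 0 < √(p * (1 - p)) := fun p ⟨hp, hp1⟩ =>
    sqrt_pos.mpr (mul_pos (by linarith) (by linarith))
  refine antitoneOn_of_hasDerivWithinAt_nonpos (convex_Ico _ _)
    (ContinuousOn.div (by fun_prop) (by fun_prop) fun p hp => (hpos p hp).ne')
    (f' := fun p => ((1 - p) * log (1 - p) - p * log p) / (2 * √(p * (1 - p)) ^ 3)) ?_ ?_
  all_goals rw [interior_Ico]; intro p hp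
  · have hp0 : 0 < p := by linarith [hp.1]
    have hs := hpos p (Ioo_subset_Ico_self hp)
    refine (((hasDerivAt_binEntropy hp0.ne' hp.2.ne).div
      (hasDerivAt_sqrt_mul_one_sub hp0 hp.2) hs.ne').congr_deriv ?_).hasDerivWithinAt
    field_simp
    rw [sq_sqrt (mul_pos hp0 (by linarith [hp.2])).le, binEntropy, log_inv, log_inv]
    ring
  · exact div_nonpos_of_nonpos_of_nonneg
      (by linarith [one_sub_mul_log_one_sub_le_mul_log hp.1.le hp.2]) (by positivity)

lemma log_two_sub_binEntropy_le {p : ℝ} (hp0 : 0 ≤ p) (hp1 : p ≤ 1) :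
    log 2 - binEntropy p ≤ 1 - 2 * √(p * (1 - p)) := by
  wlog hp : 2⁻¹ ≤ p generalizing p
  · simpa [mul_comm] using this (p := 1 - p) (by linarith) (by linarith) (by linarith)
  have h := monotoneOn_binEntropy_sub_two_mul_sqrt ⟨le_rfl, by norm_num⟩ ⟨hp, hp1⟩ hp
  simp only [binEntropy_two_inv, sqrt_two_inv_mul_one_sub_two_inv] at h
  linarith

lemma binEntropy_le_two_mul_log_two_mul_sqrt {p : ℝ} (hp0 : 0 ≤ p) (hp1 : p ≤ 1) :
    binEntropy p ≤ 2 * log 2 * √(p * (1 - p)) := by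
  wlog hp : 2⁻¹ ≤ p generalizing p
  · simpa [mul_comm] using this (p := 1 - p) (by linarith) (by linarith) (by linarith)
  rcases hp1.lt_or_eq with hp1 | rfl
  · have h := antitoneOn_binEntropy_div_sqrt ⟨le_rfl, by norm_num⟩ ⟨hp, hp1⟩ hp
    simp only [binEntropy_two_inv, sqrt_two_inv_mul_one_sub_two_inv] at h
    rw [div_inv_eq_mul, div_le_iff₀ (sqrt_pos.mpr (mul_pos (by linarith) (by linarith)))] at h
    linarith
  · simp

lemma mul_log_two_mul (x : ℝ) : x * log (2 * x) = x * log 2 + x * log x := by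
  rcases eq_or_ne x 0 with rfl | hx
  · simp
  · rw [log_mul two_ne_zero hx]
    ring

lemma mul_log_two_mul_add_mul_log_two_mul {a b : ℝ} (hab : a + b = 1) :
    a * log (2 * a) + b * log (2 * b) = log 2 - binEntropy a := by
  obtain rfl : b = 1 - a := by linarith
  rw [mul_log_two_mul, mul_log_two_mul, binEntropy, log_inv, log_inv]
  ring

lemma sqrt_sub_sqrt_sq {a b : ℝ} (ha : 0 ≤ a) (hb : 0 ≤ b) (hab : a + b = 1) :
    (√a - √b) ^ 2 = 1 - 2 * √(a * (1 - a)) := by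
  obtain rfl : b = 1 - a := by linarith
  rw [sub_sq, sq_sqrt ha, sq_sqrt hb, sqrt_mul ha]
  ring

lemma log_two_mul_sqrt_sub_sqrt_sq_le {a b : ℝ} (ha : 0 ≤ a) (hb : 0 ≤ b) (hab : a + b = 1) :
    log 2 * (√a - √b) ^ 2 ≤ a * log (2 * a) + b * log (2 * b) := by
  rw [mul_log_two_mul_add_mul_log_two_mul hab, sqrt_sub_sqrt_sq ha hb hab]
  linarith [binEntropy_le_two_mul_log_two_mul_sqrt ha (by linarith : a ≤ 1)]

lemma mul_log_two_mul_add_mul_log_two_mul_le {a b : ℝ} (ha : 0 ≤ a) (hb : 0 ≤ b)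
    (hab : a + b = 1) : a * log (2 * a) + b * log (2 * b) ≤ (√a - √b) ^ 2 := by
  rw [mul_log_two_mul_add_mul_log_two_mul hab, sqrt_sub_sqrt_sq ha hb hab]
  exact log_two_sub_binEntropy_le ha (by linarith)

lemma sub_two_inv_le_mul_log_two_mul {y : ℝ} (hy : 0 ≤ y) : y - 2⁻¹ ≤ y * log (2 * y) := by
  rcases hy.eq_or_lt with rfl | hy
  · norm_num
  · have h := mul_le_mul_of_nonneg_left
      (one_sub_inv_le_log_of_pos (by positivity : 0 < 2 * y)) hy.le
    rwa [show y * (1 - (2 * y)⁻¹) = y - 2⁻¹ by field_simp] at h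

lemma abs_mul_log_two_mul_le_one {y : ℝ} (hy0 : 0 ≤ y) (hy1 : y ≤ 1) :
    |y * log (2 * y)| ≤ 1 := by
  rcases hy0.eq_or_lt with rfl | hy0
  · simp
  · have h := mul_le_mul_of_nonneg_left
      (log_le_sub_one_of_pos (by positivity : 0 < 2 * y)) hy0.le
    rw [abs_le]
    constructor <;> nlinarith [sub_two_inv_le_mul_log_two_mul hy0.le]

section Measure

variable {Ω : Type*} [MeasurableSpace Ω]

lemma ae_toReal_rnDeriv_add_toReal_rnDeriv_eq_one (P Q : Measure Ω) [IsFiniteMeasure P]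
    [IsFiniteMeasure Q] :
    ∀ᵐ x ∂(P + Q), (P.rnDeriv (P + Q) x).toReal + (Q.rnDeriv (P + Q) x).toReal = 1 := by
  filter_upwards [Measure.rnDeriv_add' P Q (P + Q), Measure.rnDeriv_self (P + Q),
    Measure.rnDeriv_lt_top P (P + Q), Measure.rnDeriv_lt_top Q (P + Q)] with x hadd hself hP hQ
  rw [← ENNReal.toReal_add hP.ne hQ.ne, ← Pi.add_apply, ← hadd, hself, ENNReal.toReal_one]

lemma integrable_sqrt_toReal_rnDeriv_sub_sqrt_sq (P Q ν : Measure Ω) [IsFiniteMeasure P]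
    [IsFiniteMeasure Q] :
    Integrable (fun x => (√(P.rnDeriv ν x).toReal - √(Q.rnDeriv ν x).toReal) ^ 2) ν := by
  refine Integrable.mono' ((Measure.integrable_toReal_rnDeriv (μ := P)).add
    (Measure.integrable_toReal_rnDeriv (μ := Q))) (by fun_prop) (ae_of_all _ fun x => ?_)
  rw [Pi.add_apply, norm_of_nonneg (sq_nonneg _), sub_sq, sq_sqrt ENNReal.toReal_nonneg,
    sq_sqrt ENNReal.toReal_nonneg]
  nlinarith [mul_nonneg (sqrt_nonneg (P.rnDeriv ν x).toReal) (sqrt_nonneg (Q.rnDeriv ν x).toReal)]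

variable {R ν : Measure Ω} [IsFiniteMeasure ν]

lemma integrable_toReal_rnDeriv_mul_log_two_mul (hRν : R ≤ ν) :
    Integrable (fun x => (R.rnDeriv ν x).toReal * log (2 * (R.rnDeriv ν x).toReal)) ν := by
  refine Integrable.mono' (integrable_const 1) (by fun_prop) ?_
  filter_upwards [Measure.rnDeriv_le_one_of_le hRν] with x hx
  exact abs_mul_log_two_mul_le_one ENNReal.toReal_nonneg
    (by simpa using ENNReal.toReal_mono ENNReal.one_ne_top hx)

lemma measureReal_univ_sub_le_integral_toReal_rnDeriv_mul_log_two_mul (hRν : R ≤ ν) :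
    R.real univ - 2⁻¹ * ν.real univ
      ≤ ∫ x, (R.rnDeriv ν x).toReal * log (2 * (R.rnDeriv ν x).toReal) ∂ν := by
  have : IsFiniteMeasure R := isFiniteMeasure_of_le ν hRν
  calc R.real univ - 2⁻¹ * ν.real univ = ∫ x, ((R.rnDeriv ν x).toReal - 2⁻¹) ∂ν := by
        rw [integral_sub Measure.integrable_toReal_rnDeriv (integrable_const _),
          Measure.integral_toReal_rnDeriv (Measure.absolutelyContinuous_of_le hRν),
          integral_const, smul_eq_mul, mul_comm]
    _ ≤ _ := integral_mono (Measure.integrable_toReal_rnDeriv.sub (integrable_const _))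
        (integrable_toReal_rnDeriv_mul_log_two_mul hRν)
        fun x => sub_two_inv_le_mul_log_two_mul ENNReal.toReal_nonneg

lemma klDiv_inv_two_smul_of_le (hRν : R ≤ ν) :
    klDiv R ((2 : ℝ≥0∞)⁻¹ • ν)
      = ENNReal.ofReal (∫ x, (R.rnDeriv ν x).toReal * log (2 * (R.rnDeriv ν x).toReal) ∂ν) := by
  have : IsFiniteMeasure R := isFiniteMeasure_of_le ν hRν
  have hR : R ≪ ν := Measure.absolutelyContinuous_of_le hRν
  have hlog : (fun x => log (R.rnDeriv ((2 : ℝ≥0∞)⁻¹ • ν) x).toReal)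
      =ᵐ[R] fun x => log (2 * (R.rnDeriv ν x).toReal) := by
    filter_upwards [hR.ae_le
      (Measure.rnDeriv_smul_right_of_ne_top R ν (r := 2⁻¹) (by simp) (by simp))] with x hx
    rw [hx, Pi.smul_apply, inv_inv, smul_eq_mul, ENNReal.toReal_mul, ENNReal.toReal_ofNat]
  have hint : Integrable (fun x => log (2 * (R.rnDeriv ν x).toReal)) R :=
    (integrable_rnDeriv_smul_iff hR).mp (integrable_toReal_rnDeriv_mul_log_two_mul hRν)
  rw [klDiv, if_pos ⟨hR.trans (Measure.absolutelyContinuous_smul (by simp)),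
    hint.congr hlog.symm⟩, integral_congr_ae hlog, ← integral_rnDeriv_smul hR]
  rfl

lemma jsDiv_eq_ofReal_integral (P Q : Measure Ω) [IsProbabilityMeasure P]
    [IsProbabilityMeasure Q] :
    jsDiv P Q = ENNReal.ofReal ((1 / 2) * ∫ x,
      ((P.rnDeriv (P + Q) x).toReal * log (2 * (P.rnDeriv (P + Q) x).toReal)
        + (Q.rnDeriv (P + Q) x).toReal * log (2 * (Q.rnDeriv (P + Q) x).toReal)) ∂(P + Q)) := by
  have hP : P ≤ P + Q := Measure.le_add_right le_rfl
  have hQ : Q ≤ P + Q := Measure.le_add_left le_rfl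
  have hmass : (P + Q).real univ = 2 := by
    rw [measureReal_add_apply, probReal_univ, probReal_univ]
    norm_num
  -- Gibbs' inequality: both KL integrals are nonnegative
  have hP0 := measureReal_univ_sub_le_integral_toReal_rnDeriv_mul_log_two_mul hP
  have hQ0 := measureReal_univ_sub_le_integral_toReal_rnDeriv_mul_log_two_mul hQ
  rw [probReal_univ, hmass] at hP0 hQ0
  rw [jsDiv, klDiv_inv_two_smul_of_le hP, klDiv_inv_two_smul_of_le hQ,
    integral_add (integrable_toReal_rnDeriv_mul_log_two_mul hP)
      (integrable_toReal_rnDeriv_mul_log_two_mul hQ),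
    ENNReal.ofReal_mul (by norm_num), ENNReal.ofReal_add (by linarith) (by linarith), mul_add,
    one_div, ENNReal.ofReal_inv_of_pos two_pos, ENNReal.ofReal_ofNat]

end Measure

theorem js_le_sqHellinger_and_log_two_mul_sqHellinger_le_js_general
    (Ω : Type u) [MeasurableSpace Ω]
    (P Q : Measure Ω) [IsProbabilityMeasure P] [IsProbabilityMeasure Q] :
    ENNReal.ofReal (Real.log 2 * sqHellinger P Q) ≤ jsDiv P Q ∧
      jsDiv P Q ≤ ENNReal.ofReal (sqHellinger P Q) := by
  have hP : P ≤ P + Q := Measure.le_add_right le_rfl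
  have hQ : Q ≤ P + Q := Measure.le_add_left le_rfl
  have hJS := (integrable_toReal_rnDeriv_mul_log_two_mul hP).add
    (integrable_toReal_rnDeriv_mul_log_two_mul hQ)
  have hH := integrable_sqrt_toReal_rnDeriv_sub_sqrt_sq P Q (P + Q)
  have hsum := ae_toReal_rnDeriv_add_toReal_rnDeriv_eq_one P Q
  rw [jsDiv_eq_ofReal_integral, sqHellinger, mul_left_comm, ← integral_const_mul]
  constructor <;> refine ENNReal.ofReal_le_ofReal (mul_le_mul_of_nonneg_left ?_ (by norm_num))
  · refine integral_mono_ae (hH.const_mul _) hJS ?_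
    filter_upwards [hsum] with x hx
    exact log_two_mul_sqrt_sub_sqrt_sq_le ENNReal.toReal_nonneg ENNReal.toReal_nonneg hx
  · refine integral_mono_ae hJS hH ?_
    filter_upwards [hsum] with x hx
    exact mul_log_two_mul_add_mul_log_two_mul_le ENNReal.toReal_nonneg ENNReal.toReal_nonneg hx

/-- Comparison of the Jensen-Shannon divergence (with natural logarithm) and the squared
Hellinger distance: `(ln 2) · H²(P,Q) ≤ JS(P,Q) ≤ H²(P,Q)`. -/
theorem js_le_sqHellinger_and_log_two_mul_sqHellinger_le_js
    (Ω : Type u) [MeasurableSpace Ω] [StandardBorelSpace Ω]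
    (P Q : Measure Ω) [IsProbabilityMeasure P] [IsProbabilityMeasure Q] :
    ENNReal.ofReal (Real.log 2 * sqHellinger P Q) ≤ jsDiv P Q ∧
      jsDiv P Q ≤ ENNReal.ofReal (sqHellinger P Q) :=
  js_le_sqHellinger_and_log_two_mul_sqHellinger_le_js_general Ω P Q
end
end

section
/- Let P and Q be probability measures on a product Ω₁×Ω₂×Ω₃ of standard Borel spaces, both of which are Markov chains X→Y→Z. Then the Total Variation distance satisfies TV(P,Q) ≤ TV(P_{XY},Q_{XY}) + TV(P_Y,Q_Y) + TV(P_{YZ},Q_{YZ}). -/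
open MeasureTheory ProbabilityTheory Filter
open scoped ENNReal NNReal

noncomputable section

universe u

/-- A finite measure on a product of three standard Borel spaces is a Markov chain
`X → Y → Z` if the third coordinate is conditionally independent of the first coordinate
given the second coordinate. -/
def IsMarkovChain {Ω₁ Ω₂ Ω₃ : Type*} [MeasurableSpace Ω₁] [MeasurableSpace Ω₂]
    [MeasurableSpace Ω₃] [StandardBorelSpace Ω₁] [StandardBorelSpace Ω₂]
    [StandardBorelSpace Ω₃] [Nonempty Ω₁] [Nonempty Ω₂] [Nonempty Ω₃]
    (P : Measure (Ω₁ × Ω₂ × Ω₃)) [IsFiniteMeasure P] : Prop :=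
  CondIndepFun (MeasurableSpace.comap (fun ω : Ω₁ × Ω₂ × Ω₃ => ω.2.1) inferInstance)
    (measurable_snd.fst.comap_le) (fun ω => ω.2.2) (fun ω => ω.1) P

/-- The total variation distance `TV(P,Q) = sup_A |P(A) - Q(A)|`, the supremum running over
measurable sets `A`. -/
def tvDist {Ω : Type*} [MeasurableSpace Ω] (P Q : Measure Ω) : ℝ :=
  ⨆ A : {A : Set Ω // MeasurableSet A}, |(P A.1).toReal - (Q A.1).toReal|

/-! By the Markov property `P` disintegrates as `P_{YX} ⊗ κ_P`, with `κ_P` the conditional law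
of `Z` given `Y`, and likewise `Q`. Passing from `P` to `Q` through `Q_{YX} ⊗ κ_P`, the first
step costs `TV(P_{XY}, Q_{XY})` and the second at most `∫ TV(κ_P y, κ_Q y) dQ_Y`. On a jointly
measurable family `S` of Hahn sets for `(κ_P y, κ_Q y)` this integral is
`(Q_Y ⊗ κ_P)(S) - (Q_Y ⊗ κ_Q)(S)`; replacing `Q_Y` by `P_Y` in the first term costs
`TV(P_Y, Q_Y)`, and what remains is `P_{YZ}(S) - Q_{YZ}(S) ≤ TV(P_{YZ}, Q_{YZ})`. -/

open Set

section TotalVariation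

variable {α β : Type*} [MeasurableSpace α] [MeasurableSpace β]

lemma tvDist_comm (μ ν : Measure α) : tvDist μ ν = tvDist ν μ := by
  simp only [tvDist, abs_sub_comm]

lemma abs_sub_le_tvDist (μ ν : Measure α) [IsFiniteMeasure μ] [IsFiniteMeasure ν] {A : Set α}
    (hA : MeasurableSet A) : |(μ A).toReal - (ν A).toReal| ≤ tvDist μ ν := by
  refine le_ciSup (f := fun A : {A : Set α // MeasurableSet A} => |(μ A.1).toReal - (ν A.1).toReal|)
    ⟨μ.real univ ⊔ ν.real univ, ?_⟩ ⟨A, hA⟩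
  rintro _ ⟨⟨B, -⟩, rfl⟩
  exact abs_sub_le_of_nonneg_of_le measureReal_nonneg
    ((measureReal_mono (subset_univ B)).trans le_sup_left) measureReal_nonneg
    ((measureReal_mono (subset_univ B)).trans le_sup_right)

lemma sub_le_tvDist (μ ν : Measure α) [IsFiniteMeasure μ] [IsFiniteMeasure ν] {A : Set α}
    (hA : MeasurableSet A) : (μ A).toReal - (ν A).toReal ≤ tvDist μ ν :=
  (le_abs_self _).trans (abs_sub_le_tvDist μ ν hA)

lemma tvDist_le_of_abs_sub_le {μ ν : Measure α} {c : ℝ}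
    (h : ∀ A, MeasurableSet A → |(μ A).toReal - (ν A).toReal| ≤ c) : tvDist μ ν ≤ c :=
  ciSup_le fun A => h A.1 A.2

lemma tvDist_map_le (μ ν : Measure α) [IsFiniteMeasure μ] [IsFiniteMeasure ν] {f : α → β}
    (hf : Measurable f) : tvDist (μ.map f) (ν.map f) ≤ tvDist μ ν :=
  tvDist_le_of_abs_sub_le fun A hA => by
    rw [Measure.map_apply hf hA, Measure.map_apply hf hA]
    exact abs_sub_le_tvDist μ ν (hf hA)

lemma tvDist_map_measurableEquiv (μ ν : Measure α) [IsFiniteMeasure μ] [IsFiniteMeasure ν]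
    (e : α ≃ᵐ β) : tvDist (μ.map e) (ν.map e) = tvDist μ ν := by
  refine le_antisymm (tvDist_map_le μ ν e.measurable) ?_
  simpa only [MeasurableEquiv.map_symm_map] using
    tvDist_map_le (μ.map e) (ν.map e) e.symm.measurable

end TotalVariation

lemma ENNReal.toReal_add_le_toReal_add {a b c d : ℝ≥0∞} (h : a + b ≤ c + d) (hc : c ≠ ∞)
    (hd : d ≠ ∞) : a.toReal + b.toReal ≤ c.toReal + d.toReal := by
  have hcd : c + d ≠ ∞ := ENNReal.add_ne_top.2 ⟨hc, hd⟩
  have hab : a + b ≠ ∞ := ne_top_of_le_ne_top hcd h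
  rw [← ENNReal.toReal_add (ENNReal.add_ne_top.1 hab).1 (ENNReal.add_ne_top.1 hab).2,
    ← ENNReal.toReal_add hc hd]
  exact ENNReal.toReal_mono hcd h

lemma ENNReal.mul_add_le_mul_add_of_le_one {a b φ : ℝ≥0∞} (hφ : φ ≤ 1) (hba : b ≤ a) :
    a * φ + b ≤ b * φ + a :=
  calc a * φ + b = b * φ + ((a - b) * φ + b) := by
        rw [← add_assoc, ← add_mul, add_tsub_cancel_of_le hba]
    _ ≤ b * φ + ((a - b) * 1 + b) := by gcongr
    _ = b * φ + a := by rw [mul_one, tsub_add_cancel_of_le hba]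

section Density

variable {α : Type*} [MeasurableSpace α]

lemma lintegral_ne_top_of_le_one (μ : Measure α) [IsFiniteMeasure μ] {φ : α → ℝ≥0∞}
    (hφ1 : ∀ a, φ a ≤ 1) : ∫⁻ a, φ a ∂μ ≠ ∞ :=
  ((lintegral_mono hφ1).trans_lt (by simp [measure_lt_top])).ne

/-- `{g ≤ f}` is a Hahn set for `μ - ν`, tested against a function `φ ≤ 1`. -/
lemma lintegral_add_le_of_withDensity {π μ ν : Measure α} {f g φ : α → ℝ≥0∞}
    (hf : Measurable f) (hg : Measurable g) (hμ : π.withDensity f = μ)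
    (hν : π.withDensity g = ν) (hφ : Measurable φ) (hφ1 : ∀ a, φ a ≤ 1) :
    ∫⁻ a, φ a ∂μ + ν {a | g a ≤ f a} ≤ ∫⁻ a, φ a ∂ν + μ {a | g a ≤ f a} := by
  have hT : MeasurableSet {a | g a ≤ f a} := measurableSet_le hg hf
  subst hμ hν
  rw [lintegral_withDensity_eq_lintegral_mul _ hf hφ,
    lintegral_withDensity_eq_lintegral_mul _ hg hφ, withDensity_apply _ hT,
    withDensity_apply _ hT, ← lintegral_indicator hT, ← lintegral_indicator hT,
    ← lintegral_add_left (hf.mul hφ), ← lintegral_add_left (hg.mul hφ)]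
  refine lintegral_mono fun a => ?_
  by_cases ha : g a ≤ f a
  · simpa [indicator_of_mem (show a ∈ {a | g a ≤ f a} from ha)]
      using ENNReal.mul_add_le_mul_add_of_le_one (hφ1 a) ha
  · simpa [indicator_of_notMem (show a ∉ {a | g a ≤ f a} from ha)]
      using mul_le_mul_left (not_le.1 ha).le (φ a)

lemma lintegral_sub_le_tvDist (μ ν : Measure α) [IsFiniteMeasure μ] [IsFiniteMeasure ν]
    {φ : α → ℝ≥0∞} (hφ : Measurable φ) (hφ1 : ∀ a, φ a ≤ 1) :
    (∫⁻ a, φ a ∂μ).toReal - (∫⁻ a, φ a ∂ν).toReal ≤ tvDist μ ν := by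
  have hT := measurableSet_le (ν.measurable_rnDeriv (μ + ν)) (μ.measurable_rnDeriv (μ + ν))
  have hHahn := lintegral_add_le_of_withDensity (μ.measurable_rnDeriv _) (ν.measurable_rnDeriv _)
    (μ.withDensity_rnDeriv_eq _ (Measure.AbsolutelyContinuous.rfl.add_right ν))
    (ν.withDensity_rnDeriv_eq _ (add_comm ν μ ▸ Measure.AbsolutelyContinuous.rfl.add_right μ))
    hφ hφ1
  have := ENNReal.toReal_add_le_toReal_add hHahn (lintegral_ne_top_of_le_one ν hφ1)
    (measure_ne_top μ _)
  linarith [sub_le_tvDist μ ν hT]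

end Density

namespace ProbabilityTheory.Kernel

variable {β γ : Type*} [MeasurableSpace β] [MeasurableSpace γ]
  [MeasurableSpace.CountableOrCountablyGenerated β γ] (κ₁ κ₂ : Kernel β γ)

def hahnSet : Set (β × γ) :=
  {p | κ₂.rnDeriv (κ₁ + κ₂) p.1 p.2 ≤ κ₁.rnDeriv (κ₁ + κ₂) p.1 p.2}

lemma measurableSet_hahnSet : MeasurableSet (hahnSet κ₁ κ₂) :=
  measurableSet_le (measurable_rnDeriv _ _) (measurable_rnDeriv _ _)

lemma apply_add_apply_hahnSet_le [IsFiniteKernel κ₁] [IsFiniteKernel κ₂] (b : β) {s : Set γ}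
    (hs : MeasurableSet s) :
    κ₁ b s + κ₂ b (Prod.mk b ⁻¹' hahnSet κ₁ κ₂) ≤ κ₂ b s + κ₁ b (Prod.mk b ⁻¹' hahnSet κ₁ κ₂) := by
  have hdensity (κ : Kernel β γ) [IsFiniteKernel κ] (hκ : κ b ≪ (κ₁ + κ₂) b) :
      ((κ₁ + κ₂) b).withDensity (κ.rnDeriv (κ₁ + κ₂) b) = κ b := by
    rw [← Kernel.withDensity_apply _ (measurable_rnDeriv _ _)]
    exact withDensity_rnDeriv_eq hκ
  have h := lintegral_add_le_of_withDensity (measurable_rnDeriv_right _ _ b)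
    (measurable_rnDeriv_right _ _ b)
    (hdensity κ₁ (by rw [add_apply]; exact Measure.AbsolutelyContinuous.rfl.add_right _))
    (hdensity κ₂ (by rw [add_apply, add_comm]; exact Measure.AbsolutelyContinuous.rfl.add_right _))
    (φ := s.indicator 1) (measurable_one.indicator hs)
    (fun _ => indicator_apply_le' (fun _ => le_rfl) (fun _ => zero_le_one))
  rw [lintegral_indicator_one hs, lintegral_indicator_one hs] at h
  exact h

end ProbabilityTheory.Kernel

section CompProd

open ProbabilityTheory.Kernel

variable {α β γ : Type*} [MeasurableSpace α] [MeasurableSpace β] [MeasurableSpace γ]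
  [MeasurableSpace.CountableOrCountablyGenerated β γ]
  (μ₁ μ₂ : Measure (β × α)) [IsFiniteMeasure μ₁] [IsFiniteMeasure μ₂]
  (κ₁ κ₂ : Kernel β γ) [IsMarkovKernel κ₁] [IsMarkovKernel κ₂]

lemma compProd_prodMkRight_sub_le {A : Set ((β × α) × γ)} (hA : MeasurableSet A) :
    ((μ₁ ⊗ₘ κ₁.prodMkRight α) A).toReal - ((μ₂ ⊗ₘ κ₂.prodMkRight α) A).toReal ≤
      tvDist μ₁ μ₂ + tvDist μ₁.fst μ₂.fst + tvDist (μ₁.fst ⊗ₘ κ₁) (μ₂.fst ⊗ₘ κ₂) := by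
  set S := hahnSet κ₁ κ₂
  have hS : MeasurableSet S := measurableSet_hahnSet κ₁ κ₂
  set φ : Kernel β γ → β × α → ℝ≥0∞ := fun κ p => κ p.1 (Prod.mk p ⁻¹' A)
  set ψ : Kernel β γ → β → ℝ≥0∞ := fun κ b => κ b (Prod.mk b ⁻¹' S)
  have hφ (κ : Kernel β γ) [IsSFiniteKernel κ] : Measurable (φ κ) :=
    (κ.prodMkRight α).measurable_kernel_prodMk_left hA
  have hψ (κ : Kernel β γ) [IsSFiniteKernel κ] : Measurable (ψ κ) :=
    κ.measurable_kernel_prodMk_left hS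
  have hA_eq (μ : Measure (β × α)) [SFinite μ] (κ : Kernel β γ) [IsSFiniteKernel κ] :
      (μ ⊗ₘ κ.prodMkRight α) A = ∫⁻ p, φ κ p ∂μ :=
    Measure.compProd_apply hA
  have hS_eq (μ : Measure (β × α)) [SFinite μ] (κ : Kernel β γ) [IsSFiniteKernel κ] :
      (μ.fst ⊗ₘ κ) S = ∫⁻ b, ψ κ b ∂μ.fst :=
    Measure.compProd_apply hS
  have hHahn :
      ∫⁻ p, φ κ₁ p ∂μ₂ + ∫⁻ b, ψ κ₂ b ∂μ₂.fst ≤ ∫⁻ p, φ κ₂ p ∂μ₂ + ∫⁻ b, ψ κ₁ b ∂μ₂.fst := by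
    rw [Measure.fst, lintegral_map (hψ κ₂) measurable_fst, lintegral_map (hψ κ₁) measurable_fst,
      ← lintegral_add_left (hφ κ₁), ← lintegral_add_left (hφ κ₂)]
    exact lintegral_mono fun p => apply_add_apply_hahnSet_le κ₁ κ₂ p.1 (measurable_prodMk_left hA)
  have hμ := lintegral_sub_le_tvDist μ₁ μ₂ (hφ κ₁) fun _ => prob_le_one
  have hHahn' := ENNReal.toReal_add_le_toReal_add hHahn
    (lintegral_ne_top_of_le_one μ₂ fun _ => prob_le_one)
    (lintegral_ne_top_of_le_one μ₂.fst fun _ => prob_le_one)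
  have hfst := lintegral_sub_le_tvDist μ₂.fst μ₁.fst (hψ κ₁) fun _ => prob_le_one
  have hcompProd := sub_le_tvDist (μ₁.fst ⊗ₘ κ₁) (μ₂.fst ⊗ₘ κ₂) hS
  rw [hS_eq, hS_eq] at hcompProd
  rw [tvDist_comm] at hfst
  rw [hA_eq, hA_eq]
  linarith

theorem tvDist_compProd_prodMkRight_le :
    tvDist (μ₁ ⊗ₘ κ₁.prodMkRight α) (μ₂ ⊗ₘ κ₂.prodMkRight α) ≤
      tvDist μ₁ μ₂ + tvDist μ₁.fst μ₂.fst + tvDist (μ₁.fst ⊗ₘ κ₁) (μ₂.fst ⊗ₘ κ₂) := by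
  refine tvDist_le_of_abs_sub_le fun A hA => abs_sub_le_iff.2
    ⟨compProd_prodMkRight_sub_le μ₁ μ₂ κ₁ κ₂ hA, ?_⟩
  rw [tvDist_comm μ₁, tvDist_comm μ₁.fst, tvDist_comm (μ₁.fst ⊗ₘ κ₁)]
  exact compProd_prodMkRight_sub_le μ₂ μ₁ κ₂ κ₁ hA

end CompProd

section MarkovChain

variable {Ω₁ Ω₂ Ω₃ : Type*} [MeasurableSpace Ω₁] [MeasurableSpace Ω₂] [MeasurableSpace Ω₃]
  [StandardBorelSpace Ω₁] [StandardBorelSpace Ω₂] [StandardBorelSpace Ω₃]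
  [Nonempty Ω₁] [Nonempty Ω₂] [Nonempty Ω₃]

lemma IsMarkovChain.map_eq_compProd {P : Measure (Ω₁ × Ω₂ × Ω₃)} [IsFiniteMeasure P]
    (hP : IsMarkovChain P) :
    P.map (fun ω => ((ω.2.1, ω.1), ω.2.2)) = P.map (fun ω => (ω.2.1, ω.1)) ⊗ₘ
      (condDistrib (fun ω => ω.2.2) (fun ω => ω.2.1) P).prodMkRight Ω₁ :=
  (condDistrib_ae_eq_iff_measure_eq_compProd _ measurable_snd.snd.aemeasurable _).1
    ((condIndepFun_iff_condDistrib_prod_ae_eq_prodMkRight measurable_snd.snd measurable_fst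
      measurable_snd.fst).1 hP.symm)

end MarkovChain

/-- Subadditivity (with a middle marginal term) of the total variation distance on
three-variable Markov chains: `TV(P,Q) ≤ TV(P_XY,Q_XY) + TV(P_Y,Q_Y) + TV(P_YZ,Q_YZ)`. -/
theorem tvDist_subadditivity_markov_chain
    (Ω₁ Ω₂ Ω₃ : Type u) [MeasurableSpace Ω₁] [MeasurableSpace Ω₂] [MeasurableSpace Ω₃]
    [StandardBorelSpace Ω₁] [StandardBorelSpace Ω₂] [StandardBorelSpace Ω₃]
    [Nonempty Ω₁] [Nonempty Ω₂] [Nonempty Ω₃]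
    (P Q : Measure (Ω₁ × Ω₂ × Ω₃)) [IsProbabilityMeasure P] [IsProbabilityMeasure Q]
    (hP : IsMarkovChain P) (hQ : IsMarkovChain Q) :
    tvDist P Q ≤ tvDist (P.map fun ω => (ω.1, ω.2.1)) (Q.map fun ω => (ω.1, ω.2.1))
      + tvDist (P.map fun ω => ω.2.1) (Q.map fun ω => ω.2.1)
      + tvDist (P.map fun ω => ω.2) (Q.map fun ω => ω.2) := by
  let e : Ω₁ × Ω₂ × Ω₃ ≃ᵐ (Ω₂ × Ω₁) × Ω₃ := MeasurableEquiv.prodAssoc.symm.trans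
    (MeasurableEquiv.prodCongr MeasurableEquiv.prodComm (MeasurableEquiv.refl Ω₃))
  have hYX (R : Measure (Ω₁ × Ω₂ × Ω₃)) : R.map (fun ω => (ω.2.1, ω.1)) =
      (R.map fun ω => (ω.1, ω.2.1)).map Prod.swap := by
    rw [Measure.map_map measurable_swap (by fun_prop)]; rfl
  calc tvDist P Q = tvDist (P.map e) (Q.map e) := (tvDist_map_measurableEquiv P Q e).symm
    _ ≤ tvDist (P.map fun ω => (ω.2.1, ω.1)) (Q.map fun ω => (ω.2.1, ω.1))
          + tvDist (P.map fun ω => ω.2.1) (Q.map fun ω => ω.2.1)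
          + tvDist (P.map fun ω => ω.2) (Q.map fun ω => ω.2) := by
      have h := tvDist_compProd_prodMkRight_le (P.map fun ω => (ω.2.1, ω.1))
        (Q.map fun ω => (ω.2.1, ω.1)) (condDistrib (fun ω => ω.2.2) (fun ω => ω.2.1) P)
        (condDistrib (fun ω => ω.2.2) (fun ω => ω.2.1) Q)
      rwa [← hP.map_eq_compProd, ← hQ.map_eq_compProd, Measure.fst_map_prodMk measurable_fst,
        Measure.fst_map_prodMk measurable_fst, compProd_map_condDistrib (by fun_prop),
        compProd_map_condDistrib (by fun_prop)] at h
    _ ≤ _ := by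
      rw [hYX P, hYX Q]
      gcongr
      exact tvDist_map_le _ _ measurable_swap
end
end

section
/- Let f₁, f₂ : (0,∞) → ℝ be convex lower semi-continuous functions with f₁(1) = f₂(1) = 0 (extended by f_j(0) := lim_{t↓0} f_j(t)), and suppose the f₂-divergence satisfies subadditivity on Bayes-nets, i.e., for every pair of Bayes-nets P, Q with respect to any common DAG, D_{f₂}(P,Q) ≤ Σ_{i=1}^n D_{f₂}(P_{X_i∪X_{Π_i}}, Q_{X_i∪X_{Π_i}}). Let I ⊆ [0,∞) be an interval, and let 0 < A < B be constants such that for every t ∈ I one has f₂(t) ≥ 0 and A ≤ f₁(t)/f₂(t) ≤ B. Then for every pair of Bayes-nets P, Q on Ω₁×⋯×Ω_n with respect to a common DAG, with P having a density dP/dQ with respect to Q satisfying dP/dQ(x) ∈ I for all x ∈ Ω, it holds that (A/B)·D_{f₁}(P,Q) ≤ Σ_{i=1}^n D_{f₁}(P_{X_i∪X_{Π_i}}, Q_{X_i∪X_{Π_i}}). -/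
open MeasureTheory ProbabilityTheory Filter
open scoped ENNReal NNReal

noncomputable section

universe u

/-- Projection of a point of a product space onto the coordinates in `S`. -/
def proj {n : ℕ} {Ω : Fin n → Type*} (S : Finset (Fin n)) (x : ∀ i, Ω i) (i : S) : Ω i := x i

lemma measurable_proj {n : ℕ} {Ω : Fin n → Type*} [∀ i, MeasurableSpace (Ω i)]
    (S : Finset (Fin n)) : Measurable (proj (Ω := Ω) S) :=
  measurable_pi_lambda _ fun _ => measurable_pi_apply _

/-- A finite measure `P` on a product of standard Borel spaces is a Bayes-net with respect to
the parent structure `par` (for the topological ordering `0 < 1 < ⋯ < n-1`) if, for every `i`,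
the `i`-th coordinate is conditionally independent of the tuple of previous coordinates given
the tuple of parent coordinates `par i`. -/
def IsBayesNet {n : ℕ} {Ω : Fin n → Type*} [∀ i, MeasurableSpace (Ω i)]
    [∀ i, StandardBorelSpace (Ω i)] [∀ i, Nonempty (Ω i)]
    (P : Measure (∀ i, Ω i)) [IsFiniteMeasure P] (par : Fin n → Finset (Fin n)) : Prop :=
  ∀ i : Fin n,
    CondIndepFun (MeasurableSpace.comap (proj (par i)) inferInstance)
      ((measurable_proj (par i)).comap_le) (fun x => x i) (proj (Finset.Iio i)) P

/-- The `f`-divergence `D_f(P,Q) = ∫ f(dP/dQ) dQ` (for `P` absolutely continuous w.r.t. `Q`). -/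
def fDiv (f : ℝ → ℝ) {Ω : Type*} [MeasurableSpace Ω] (P Q : Measure Ω) : ℝ :=
  ∫ x, f ((P.rnDeriv Q x).toReal) ∂Q

/-!
If the density `dP/dQ` takes values in `I`, integrating `A f₂ ≤ f₁ ≤ B f₂` gives
`A D_{f₂} ≤ D_{f₁} ≤ B D_{f₂}`. The density of a pair of marginals again takes values in `I`:
it has the same integral as `dP/dQ` over every cylinder set, so if it were strictly below
(or above) all of `I` on a non-null set, strict monotonicity of the integral would give a
contradiction. Hence
`(A/B) D_{f₁}(P,Q) ≤ A D_{f₂}(P,Q) ≤ A ∑ D_{f₂}(marginals) ≤ ∑ D_{f₁}(marginals)`.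
-/

open Set

section Lemmas

variable {α β : Type*} [MeasurableSpace α] [MeasurableSpace β]

lemma continuousOn_Ici_of_convexOn_Ioi {f : ℝ → ℝ} (hconv : ConvexOn ℝ (Ioi 0) f)
    (h0 : Tendsto f (nhdsWithin 0 (Ioi 0)) (nhds (f 0))) : ContinuousOn f (Ici 0) := by
  intro t ht
  rcases (mem_Ici.mp ht).eq_or_lt with rfl | hpos
  · exact continuousWithinAt_Ioi_iff_Ici.mp h0
  · exact ((hconv.continuousOn isOpen_Ioi).continuousAt (Ioi_mem_nhds hpos)).continuousWithinAt

lemma ContinuousOn.aestronglyMeasurable_comp {f : ℝ → ℝ} {s : Set ℝ} (hf : ContinuousOn f s)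
    {ρ : α → ℝ} (hρ : Measurable ρ) (hρs : ∀ x, ρ x ∈ s) (ν : Measure α) :
    AEStronglyMeasurable (fun x => f (ρ x)) ν :=
  (hf.domRestrict.measurable.comp (hρ.subtype_mk (h := hρs))).aestronglyMeasurable

lemma integral_mem_Icc_of_ae_bounds {ν : Measure α} {g₁ g₂ : α → ℝ}
    (hg₁ : AEStronglyMeasurable g₁ ν) (hg₂ : AEStronglyMeasurable g₂ ν) {A B : ℝ} (hA : 0 < A)
    (h0 : ∀ᵐ x ∂ν, 0 ≤ g₂ x) (hl : ∀ᵐ x ∂ν, A * g₂ x ≤ g₁ x) (hu : ∀ᵐ x ∂ν, g₁ x ≤ B * g₂ x) :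
    ∫ x, g₁ x ∂ν ∈ Icc (A * ∫ x, g₂ x ∂ν) (B * ∫ x, g₂ x ∂ν) := by
  have hint : Integrable g₁ ν ↔ Integrable g₂ ν := by
    refine ⟨fun h₁ => (h₁.const_mul A⁻¹).mono hg₂ ?_, fun h₂ => (h₂.const_mul B).mono hg₁ ?_⟩
    · filter_upwards [h0, hl] with x h0x hlx
      rw [Real.norm_eq_abs, Real.norm_eq_abs, abs_of_nonneg h0x]
      exact ((le_inv_mul_iff₀ hA).mpr hlx).trans (le_abs_self _)
    · filter_upwards [h0, hl, hu] with x h0x hlx hux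
      have hg₁x : 0 ≤ g₁ x := (mul_nonneg hA.le h0x).trans hlx
      rw [Real.norm_eq_abs, Real.norm_eq_abs, abs_of_nonneg hg₁x]
      exact hux.trans (le_abs_self _)
  by_cases h₂ : Integrable g₂ ν
  · rw [← integral_const_mul, ← integral_const_mul]
    exact ⟨integral_mono_ae (h₂.const_mul A) (hint.mpr h₂) hl,
      integral_mono_ae (hint.mpr h₂) (h₂.const_mul B) hu⟩
  · simp [integral_undef h₂, integral_undef (hint.not.mpr h₂)]

lemma fDiv_mem_Icc_of_bounds {μ ν : Measure α} {f₁ f₂ : ℝ → ℝ}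
    (hf₁ : ContinuousOn f₁ (Ici 0)) (hf₂ : ContinuousOn f₂ (Ici 0)) {I : Set ℝ} {A B : ℝ}
    (hA : 0 < A) (hbound : ∀ t ∈ I, 0 ≤ f₂ t ∧ A * f₂ t ≤ f₁ t ∧ f₁ t ≤ B * f₂ t)
    (hmem : ∀ᵐ x ∂ν, (μ.rnDeriv ν x).toReal ∈ I) :
    fDiv f₁ μ ν ∈ Icc (A * fDiv f₂ μ ν) (B * fDiv f₂ μ ν) := by
  have hρ : Measurable fun x => (μ.rnDeriv ν x).toReal :=
    (Measure.measurable_rnDeriv μ ν).ennreal_toReal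
  have hρ0 : ∀ x, (μ.rnDeriv ν x).toReal ∈ Ici 0 := fun _ => ENNReal.toReal_nonneg
  exact integral_mem_Icc_of_ae_bounds (hf₁.aestronglyMeasurable_comp hρ hρ0 ν)
    (hf₂.aestronglyMeasurable_comp hρ hρ0 ν) hA
    (by filter_upwards [hmem] with x hx using (hbound _ hx).1)
    (by filter_upwards [hmem] with x hx using (hbound _ hx).2.1)
    (by filter_upwards [hmem] with x hx using (hbound _ hx).2.2)

lemma measure_eq_zero_of_setLIntegral_eq_of_lt {ν : Measure α} {s : Set α} (hs : MeasurableSet s)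
    {u v : α → ℝ≥0∞} (hv : Measurable v) (hu : ∫⁻ x in s, u x ∂ν ≠ ∞)
    (heq : ∫⁻ x in s, u x ∂ν = ∫⁻ x in s, v x ∂ν) (hlt : ∀ᵐ x ∂ν, x ∈ s → u x < v x) :
    ν s = 0 := by
  by_contra hs0
  exact (setLIntegral_strict_mono hs hs0 hv hu hlt).ne heq

variable {μ ν : Measure α} [IsFiniteMeasure μ] [IsFiniteMeasure ν] {π : α → β}

lemma setLIntegral_rnDeriv_map_comp (hμν : μ ≪ ν) (hπ : Measurable π) {E : Set β}
    (hE : MeasurableSet E) :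
    ∫⁻ x in π ⁻¹' E, (μ.map π).rnDeriv (ν.map π) (π x) ∂ν = ∫⁻ x in π ⁻¹' E, μ.rnDeriv ν x ∂ν := by
  rw [← setLIntegral_map hE (Measure.measurable_rnDeriv _ _) hπ,
    Measure.setLIntegral_rnDeriv (hμν.map hπ), Measure.map_apply hπ hE,
    Measure.setLIntegral_rnDeriv hμν]

lemma map_measure_eq_zero_of_rnDeriv_map_lt (hμν : μ ≪ ν) (hπ : Measurable π) {S : Set β}
    (hS : MeasurableSet S)
    (hlt : (∀ᵐ x ∂ν, π x ∈ S → (μ.map π).rnDeriv (ν.map π) (π x) < μ.rnDeriv ν x) ∨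
      (∀ᵐ x ∂ν, π x ∈ S → μ.rnDeriv ν x < (μ.map π).rnDeriv (ν.map π) (π x))) :
    ν.map π S = 0 := by
  have heq := setLIntegral_rnDeriv_map_comp hμν hπ hS
  have hfin : ∫⁻ x in π ⁻¹' S, μ.rnDeriv ν x ∂ν ≠ ∞ := by
    rw [Measure.setLIntegral_rnDeriv hμν]
    exact measure_ne_top μ _
  rw [Measure.map_apply hπ hS]
  rcases hlt with hlt | hlt
  · exact measure_eq_zero_of_setLIntegral_eq_of_lt (hπ hS) (Measure.measurable_rnDeriv μ ν)
      (heq ▸ hfin) heq hlt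
  · exact measure_eq_zero_of_setLIntegral_eq_of_lt (hπ hS)
      ((Measure.measurable_rnDeriv _ _).comp hπ) hfin heq.symm hlt

lemma ae_toReal_rnDeriv_map_mem (hμν : μ ≪ ν) (hπ : Measurable π) {I : Set ℝ}
    (hI : I.OrdConnected) (hmem : ∀ᵐ x ∂ν, (μ.rnDeriv ν x).toReal ∈ I) :
    ∀ᵐ y ∂ν.map π, ((μ.map π).rnDeriv (ν.map π) y).toReal ∈ I := by
  set r := μ.rnDeriv ν
  set g := (μ.map π).rnDeriv (ν.map π)
  have hg : Measurable fun y => (g y).toReal := (Measure.measurable_rnDeriv _ _).ennreal_toReal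
  have hr_fin : ∀ᵐ x ∂ν, r x < ∞ := Measure.rnDeriv_lt_top μ ν
  have hg_fin : ∀ᵐ x ∂ν, g (π x) < ∞ :=
    ae_of_ae_map hπ.aemeasurable (Measure.rnDeriv_lt_top _ _)
  -- a real number outside the order-connected set `I` lies strictly below or strictly above it
  have hbelow : ∀ᵐ y ∂ν.map π, (g y).toReal ∉ {t | ∀ s ∈ I, t < s} := by
    have hL : IsLowerSet {t : ℝ | ∀ s ∈ I, t < s} := fun a b hba ha s hs => hba.trans_lt (ha s hs)
    refine measure_eq_zero_iff_ae_notMem.mp <| map_measure_eq_zero_of_rnDeriv_map_lt hμν hπ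
      (hg hL.ordConnected.measurableSet) (Or.inl ?_)
    filter_upwards [hmem, hr_fin, hg_fin] with x hx hrx hgx hlt
    exact (ENNReal.toReal_lt_toReal hgx.ne hrx.ne).mp (hlt _ hx)
  have habove : ∀ᵐ y ∂ν.map π, (g y).toReal ∉ {t | ∀ s ∈ I, s < t} := by
    have hU : IsUpperSet {t : ℝ | ∀ s ∈ I, s < t} := fun a b hab ha s hs => (ha s hs).trans_le hab
    refine measure_eq_zero_iff_ae_notMem.mp <| map_measure_eq_zero_of_rnDeriv_map_lt hμν hπ
      (hg hU.ordConnected.measurableSet) (Or.inr ?_)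
    filter_upwards [hmem, hr_fin, hg_fin] with x hx hrx hgx hlt
    exact (ENNReal.toReal_lt_toReal hrx.ne hgx.ne).mp (hlt _ hx)
  filter_upwards [hbelow, habove] with y hyL hyU
  simp only [not_forall, not_lt] at hyL hyU
  obtain ⟨s₁, hs₁, h₁⟩ := hyL
  obtain ⟨s₂, hs₂, h₂⟩ := hyU
  exact hI.out hs₁ hs₂ ⟨h₁, h₂⟩

end Lemmas

theorem fDiv_linear_subadditivity_of_quotient_bound_general
    (f₁ f₂ : ℝ → ℝ)
    (hf₁convex : ConvexOn ℝ (Set.Ioi 0) f₁) (hf₂convex : ConvexOn ℝ (Set.Ioi 0) f₂)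
    (hf₁zero : Tendsto f₁ (nhdsWithin 0 (Set.Ioi 0)) (nhds (f₁ 0)))
    (hf₂zero : Tendsto f₂ (nhdsWithin 0 (Set.Ioi 0)) (nhds (f₂ 0)))
    (hsub : ∀ (n : ℕ) (Ω : Fin n → Type u) [∀ i, MeasurableSpace (Ω i)]
      [∀ i, StandardBorelSpace (Ω i)] [∀ i, Nonempty (Ω i)]
      (par : Fin n → Finset (Fin n)), (∀ i, par i ⊆ Finset.Iio i) →
      ∀ (P Q : Measure (∀ i, Ω i)) [IsProbabilityMeasure P] [IsProbabilityMeasure Q],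
      IsBayesNet P par → IsBayesNet Q par →
      fDiv f₂ P Q ≤ ∑ i : Fin n,
        fDiv f₂ (P.map (proj (insert i (par i)))) (Q.map (proj (insert i (par i)))))
    (I : Set ℝ) (hI : I ⊆ Set.Ici 0) (hIconn : I.OrdConnected)
    (A B : ℝ) (hA : 0 < A) (hAB : A < B)
    (hbound : ∀ t ∈ I, 0 ≤ f₂ t ∧ A * f₂ t ≤ f₁ t ∧ f₁ t ≤ B * f₂ t)
    {n : ℕ} (Ω : Fin n → Type u) [∀ i, MeasurableSpace (Ω i)]
    [∀ i, StandardBorelSpace (Ω i)] [∀ i, Nonempty (Ω i)]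
    (par : Fin n → Finset (Fin n)) (hpar : ∀ i, par i ⊆ Finset.Iio i)
    (P Q : Measure (∀ i, Ω i)) [IsProbabilityMeasure P] [IsProbabilityMeasure Q]
    (hP : IsBayesNet P par) (hQ : IsBayesNet Q par)
    (h : (∀ i, Ω i) → ℝ) (hmeas : Measurable h)
    (hdensity : P = Q.withDensity (fun x => ENNReal.ofReal (h x)))
    (hrange : ∀ x, h x ∈ I) :
    (A / B) * fDiv f₁ P Q ≤ ∑ i : Fin n,
      fDiv f₁ (P.map (proj (insert i (par i)))) (Q.map (proj (insert i (par i)))) := by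
  have hB : 0 < B := hA.trans hAB
  have hf₁ := continuousOn_Ici_of_convexOn_Ioi hf₁convex hf₁zero
  have hf₂ := continuousOn_Ici_of_convexOn_Ioi hf₂convex hf₂zero
  have hPQ : P ≪ Q := hdensity ▸ withDensity_absolutelyContinuous _ _
  have hmem : ∀ᵐ x ∂Q, (P.rnDeriv Q x).toReal ∈ I := by
    filter_upwards [hdensity ▸ Measure.rnDeriv_withDensity Q hmeas.ennreal_ofReal] with x hx
    rw [hx, ENNReal.toReal_ofReal (hI (hrange x))]
    exact hrange x
  have hjoint : fDiv f₁ P Q ≤ B * fDiv f₂ P Q :=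
    (fDiv_mem_Icc_of_bounds hf₁ hf₂ hA hbound hmem).2
  have hlocal (i : Fin n) :
      A * fDiv f₂ (P.map (proj (insert i (par i)))) (Q.map (proj (insert i (par i)))) ≤
        fDiv f₁ (P.map (proj (insert i (par i)))) (Q.map (proj (insert i (par i)))) :=
    (fDiv_mem_Icc_of_bounds hf₁ hf₂ hA hbound
      (ae_toReal_rnDeriv_map_mem hPQ (measurable_proj _) hIconn hmem)).1
  calc (A / B) * fDiv f₁ P Q ≤ (A / B) * (B * fDiv f₂ P Q) := by gcongr
    _ = A * fDiv f₂ P Q := by field_simp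
    _ ≤ A * ∑ i : Fin n,
        fDiv f₂ (P.map (proj (insert i (par i)))) (Q.map (proj (insert i (par i)))) :=
      mul_le_mul_of_nonneg_left (hsub n Ω par hpar P Q hP hQ) hA.le
    _ ≤ ∑ i : Fin n,
        fDiv f₁ (P.map (proj (insert i (par i)))) (Q.map (proj (insert i (par i)))) := by
      rw [Finset.mul_sum]
      exact Finset.sum_le_sum fun i _ => hlocal i

/-- If the `f₂`-divergence is subadditive on Bayes-nets, `I ⊆ [0,∞)` is an interval on
which `f₂ ≥ 0` and `A · f₂ ≤ f₁ ≤ B · f₂` (for constants `0 < A < B`; this is the meaning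
of `A ≤ f₁/f₂ ≤ B` on `I`), then the `f₁`-divergence satisfies `(A/B)`-linear
subadditivity for all pairs of Bayes-nets whose density `dP/dQ` takes values in `I`. -/
theorem fDiv_linear_subadditivity_of_quotient_bound
    (f₁ f₂ : ℝ → ℝ)
    (hf₁convex : ConvexOn ℝ (Set.Ioi 0) f₁) (hf₂convex : ConvexOn ℝ (Set.Ioi 0) f₂)
    (hf₁lsc : LowerSemicontinuousOn f₁ (Set.Ici 0))
    (hf₂lsc : LowerSemicontinuousOn f₂ (Set.Ici 0))
    (hf₁one : f₁ 1 = 0) (hf₂one : f₂ 1 = 0)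
    (hf₁zero : Tendsto f₁ (nhdsWithin 0 (Set.Ioi 0)) (nhds (f₁ 0)))
    (hf₂zero : Tendsto f₂ (nhdsWithin 0 (Set.Ioi 0)) (nhds (f₂ 0)))
    (hsub : ∀ (n : ℕ) (Ω : Fin n → Type u) [∀ i, MeasurableSpace (Ω i)]
      [∀ i, StandardBorelSpace (Ω i)] [∀ i, Nonempty (Ω i)]
      (par : Fin n → Finset (Fin n)), (∀ i, par i ⊆ Finset.Iio i) →
      ∀ (P Q : Measure (∀ i, Ω i)) [IsProbabilityMeasure P] [IsProbabilityMeasure Q],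
      IsBayesNet P par → IsBayesNet Q par →
      fDiv f₂ P Q ≤ ∑ i : Fin n,
        fDiv f₂ (P.map (proj (insert i (par i)))) (Q.map (proj (insert i (par i)))))
    (I : Set ℝ) (hI : I ⊆ Set.Ici 0) (hIconn : I.OrdConnected)
    (A B : ℝ) (hA : 0 < A) (hAB : A < B)
    (hbound : ∀ t ∈ I, 0 ≤ f₂ t ∧ A * f₂ t ≤ f₁ t ∧ f₁ t ≤ B * f₂ t)
    {n : ℕ} (Ω : Fin n → Type u) [∀ i, MeasurableSpace (Ω i)]
    [∀ i, StandardBorelSpace (Ω i)] [∀ i, Nonempty (Ω i)]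
    (par : Fin n → Finset (Fin n)) (hpar : ∀ i, par i ⊆ Finset.Iio i)
    (P Q : Measure (∀ i, Ω i)) [IsProbabilityMeasure P] [IsProbabilityMeasure Q]
    (hP : IsBayesNet P par) (hQ : IsBayesNet Q par)
    (h : (∀ i, Ω i) → ℝ) (hmeas : Measurable h)
    (hdensity : P = Q.withDensity (fun x => ENNReal.ofReal (h x)))
    (hrange : ∀ x, h x ∈ I) :
    (A / B) * fDiv f₁ P Q ≤ ∑ i : Fin n,
      fDiv f₁ (P.map (proj (insert i (par i)))) (Q.map (proj (insert i (par i)))) :=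
  fDiv_linear_subadditivity_of_quotient_bound_general f₁ f₂ hf₁convex hf₂convex hf₁zero hf₂zero hsub
    I hI hIconn A B hA hAB hbound Ω par hpar P Q hP hQ h hmeas hdensity hrange
end
end
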